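/- arXiv:2501.15026 — 2 statements merged into one kernel-verified Lean document; each statement's English description precedes it below -/
import Mathlib

section
/- Let R > 0, let c = −4 coth²(R/2) log cosh(R/2), and define u : (0, R] → ℝ by u(r) = 2(log cosh(r/2))² − 2(log cosh(R/2))² + Li₂(tanh²(r/2)) − Li₂(tanh²(R/2)) + c·log( cosh(r/2)/cosh(R/2) ). For a differentiable function f on (0,R) define (Lf)(r) = (1/sinh r)·d/dr( sinh r · f′(r) ). Then L(Lu)(r) = 1 for all r ∈ (0, R), and u(R) = 0 and u′(R) = 0. -/
open MeasureTheory Real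

/-- The dilogarithm, defined for real `x ≤ 1` by `Li₂(x) = −∫₀ˣ log(1−t)/t dt`. -/
noncomputable def Li2 (x : ℝ) : ℝ := - ∫ t in (0:ℝ)..x, Real.log (1 - t) / t

/-- The Laplace–Beltrami operator on the hyperbolic plane (curvature −1) acting on
functions of the geodesic distance `r`: `(Lf)(r) = (1/sinh r) (sinh r · f′(r))′`. -/
noncomputable def hypLap (f : ℝ → ℝ) (r : ℝ) : ℝ :=
  (1 / Real.sinh r) * deriv (fun s => Real.sinh s * deriv f s) r

/-!
Write `L = log cosh (r/2)` and `T = tanh (r/2)`. Since `Li₂′(x) = -log (1 - x) / x` and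
`1 - T² = 1 / cosh² (r/2)`, one gets `u′ = 2L/T + (c/2) T`, hence the flux
`sinh r · u′ = 2 (1 + cosh r) L + (c/2)(cosh r - 1)` and `Lu = 2L + 1 + c/2`.
Then `sinh r · (Lu)′ = sinh r · T = cosh r - 1`, whose derivative is `sinh r`, so `L(Lu) = 1`.
The constant `c` is exactly the one making the flux, hence `u′`, vanish at `r = R`.
-/

open Topology Set

lemma hasDerivAt_Li2 {x : ℝ} (hx0 : x ≠ 0) (hx1 : x < 1) :
    HasDerivAt Li2 (-(log (1 - x) / x)) x := by
  set g : ℝ → ℝ := fun t => log (1 - t)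
  have hg : ∀ t < 1, DifferentiableAt ℝ g t := fun t ht =>
    (differentiableAt_id.const_sub 1).log (sub_pos.2 ht).ne'
  -- the integrand `g t / t` agrees off `0` with `dslope g 0`, which is continuous across `0`
  have hslope : ContinuousOn (dslope g 0) (Iio 1) := by
    intro t ht
    rcases eq_or_ne t 0 with rfl | ht0
    · exact (continuousAt_dslope_same.2 (hg 0 ht)).continuousWithinAt
    · exact ((continuousAt_dslope_of_ne ht0).2 (hg t ht).continuousAt).continuousWithinAt
  have hint : IntervalIntegrable (fun t => g t / t) volume 0 x := by
    refine (hslope.mono ?_).intervalIntegrable.congr_uIoo fun t ht => ?_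
    · exact fun t ht => ht.2.trans_lt (sup_lt_iff.2 ⟨one_pos, hx1⟩)
    · have ht0 : t ≠ 0 := fun h => by simp [h, uIoo] at ht; linarith [ht.1, ht.2]
      simp [dslope_of_ne _ ht0, slope_def_field, g]
  have hmeas : Measurable fun t => g t / t := by fun_prop
  exact (intervalIntegral.integral_hasDerivAt_right hint
    hmeas.stronglyMeasurable.stronglyMeasurableAtFilter
    ((hg x hx1).continuousAt.div continuousAt_id hx0)).neg

lemma hypLap_eq_of_eventuallyEq {f g : ℝ → ℝ} {r g' : ℝ}
    (h : (fun s => sinh s * deriv f s) =ᶠ[𝓝 r] g) (hg : HasDerivAt g g' r) :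
    hypLap f r = g' / sinh r := by
  rw [hypLap, h.deriv_eq, hg.deriv, one_div_mul_eq_div]

lemma hasDerivAt_log_cosh_half (r : ℝ) :
    HasDerivAt (fun s => log (cosh (s / 2))) (tanh (r / 2) / 2) r := by
  refine (((hasDerivAt_id' r).div_const 2).cosh.log (cosh_pos _).ne').congr_deriv ?_
  rw [tanh_eq_sinh_div_cosh]; ring

lemma hasDerivAt_tanh_half_sq (r : ℝ) :
    HasDerivAt (fun s => tanh (s / 2) ^ 2) (tanh (r / 2) / cosh (r / 2) ^ 2) r := by
  simp_rw [tanh_eq_sinh_div_cosh]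
  have hd := (((hasDerivAt_id' r).div_const 2).sinh.div ((hasDerivAt_id' r).div_const 2).cosh
    (cosh_pos _).ne').pow 2
  refine hd.congr_deriv ?_
  simp only [Pi.div_apply, Nat.cast_ofNat, Nat.reduceSub, pow_one]
  field_simp
  linear_combination sinh (r / 2) * cosh_sq (r / 2)

lemma tanh_ne_zero {x : ℝ} (hx : x ≠ 0) : tanh x ≠ 0 := by
  rw [tanh_eq_sinh_div_cosh]
  exact div_ne_zero (sinh_eq_zero.not.2 hx) (cosh_pos x).ne'

lemma log_one_sub_tanh_sq (x : ℝ) : log (1 - tanh x ^ 2) = -2 * log (cosh x) := by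
  have h : 1 - tanh x ^ 2 = (cosh x ^ 2)⁻¹ := by
    rw [tanh_eq_sinh_div_cosh]
    field_simp
    linear_combination cosh_sq x
  rw [h, log_inv, log_pow]
  push_cast
  ring

lemma sinh_mul_tanh_half (x : ℝ) : sinh x * tanh (x / 2) = cosh x - 1 := by
  have hsinh := sinh_two_mul (x / 2)
  have hcosh := cosh_two_mul (x / 2)
  rw [mul_div_cancel₀ _ two_ne_zero] at hsinh hcosh
  rw [hsinh, hcosh, tanh_eq_sinh_div_cosh]
  field_simp
  linear_combination (-1) * cosh_sq (x / 2)

lemma one_add_cosh_mul_tanh_half (x : ℝ) : (1 + cosh x) * tanh (x / 2) = sinh x := by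
  have hsinh := sinh_two_mul (x / 2)
  have hcosh := cosh_two_mul (x / 2)
  rw [mul_div_cancel₀ _ two_ne_zero] at hsinh hcosh
  rw [hsinh, hcosh, tanh_eq_sinh_div_cosh]
  field_simp
  linear_combination (-sinh (x / 2)) * cosh_sq (x / 2)

noncomputable def clampedPlateProfile (R c r : ℝ) : ℝ :=
  2 * log (cosh (r / 2)) ^ 2 - 2 * log (cosh (R / 2)) ^ 2
    + Li2 (tanh (r / 2) ^ 2) - Li2 (tanh (R / 2) ^ 2)
    + c * log (cosh (r / 2) / cosh (R / 2))

section clampedPlateProfile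

variable {R c r : ℝ}

lemma hasDerivAt_clampedPlateProfile (hr : r ≠ 0) :
    HasDerivAt (clampedPlateProfile R c)
      (2 * log (cosh (r / 2)) / tanh (r / 2) + c / 2 * tanh (r / 2)) r := by
  have hT := tanh_ne_zero (div_ne_zero hr two_ne_zero)
  have hL := hasDerivAt_log_cosh_half r
  have hLi := (hasDerivAt_Li2 (pow_ne_zero 2 hT) (tanh_sq_lt_one _)).comp r
    (hasDerivAt_tanh_half_sq r)
  have hlog := (((hasDerivAt_id' r).div_const 2).cosh.div_const (cosh (R / 2))).log
    (div_ne_zero (cosh_pos _).ne' (cosh_pos _).ne')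
  refine ((((hL.pow 2).const_mul 2).sub_const _ |>.add hLi).sub_const _ |>.add
    (hlog.const_mul c)).congr_deriv ?_
  rw [log_one_sub_tanh_sq, tanh_eq_sinh_div_cosh]
  field_simp
  linear_combination (-4 * log (cosh (r / 2))) * cosh_sq (r / 2)

lemma sinh_mul_deriv_clampedPlateProfile (hr : r ≠ 0) :
    sinh r * deriv (clampedPlateProfile R c) r
      = 2 * (1 + cosh r) * log (cosh (r / 2)) + c / 2 * (cosh r - 1) := by
  have hT := tanh_ne_zero (div_ne_zero hr two_ne_zero)
  have hsinh_div : sinh r / tanh (r / 2) = 1 + cosh r :=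
    div_eq_of_eq_mul hT (one_add_cosh_mul_tanh_half r).symm
  rw [(hasDerivAt_clampedPlateProfile hr).deriv]
  calc sinh r * (2 * log (cosh (r / 2)) / tanh (r / 2) + c / 2 * tanh (r / 2))
      = 2 * (sinh r / tanh (r / 2)) * log (cosh (r / 2)) + c / 2 * (sinh r * tanh (r / 2)) := by
        ring
    _ = _ := by rw [hsinh_div, sinh_mul_tanh_half]

lemma hypLap_clampedPlateProfile (hr : r ≠ 0) :
    hypLap (clampedPlateProfile R c) r = 2 * log (cosh (r / 2)) + 1 + c / 2 := by
  have hflux := ((((hasDerivAt_cosh r).const_add 1).const_mul 2).mul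
    (hasDerivAt_log_cosh_half r)).add (((hasDerivAt_cosh r).sub_const 1).const_mul (c / 2))
  rw [hypLap_eq_of_eventuallyEq ((eventually_ne_nhds hr).mono
    fun s hs => sinh_mul_deriv_clampedPlateProfile hs) hflux]
  have hsinh : sinh r ≠ 0 := sinh_eq_zero.not.2 hr
  field_simp
  linear_combination 2 * one_add_cosh_mul_tanh_half r

lemma hypLap_hypLap_clampedPlateProfile (hr : r ≠ 0) :
    hypLap (hypLap (clampedPlateProfile R c)) r = 1 := by
  have hflux : (fun s => sinh s * deriv (hypLap (clampedPlateProfile R c)) s)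
      =ᶠ[𝓝 r] fun s => cosh s - 1 := by
    filter_upwards [eventually_ne_nhds hr] with s hs
    have hLap : hypLap (clampedPlateProfile R c) =ᶠ[𝓝 s]
        fun t => 2 * log (cosh (t / 2)) + 1 + c / 2 := by
      filter_upwards [eventually_ne_nhds hs] with t ht
      exact hypLap_clampedPlateProfile ht
    rw [hLap.deriv_eq, ((((hasDerivAt_log_cosh_half s).const_mul 2).add_const 1).add_const
      (c / 2)).deriv, ← sinh_mul_tanh_half]
    ring
  rw [hypLap_eq_of_eventuallyEq hflux ((hasDerivAt_cosh r).sub_const 1),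
    div_self (sinh_eq_zero.not.2 hr)]

lemma clampedPlateProfile_self : clampedPlateProfile R c R = 0 := by
  simp [clampedPlateProfile]

lemma deriv_clampedPlateProfile_self (hR : R ≠ 0)
    (hc : c = -4 * (cosh (R / 2) / sinh (R / 2)) ^ 2 * log (cosh (R / 2))) :
    deriv (clampedPlateProfile R c) R = 0 := by
  have hsinh : sinh (R / 2) ≠ 0 := sinh_eq_zero.not.2 (div_ne_zero hR two_ne_zero)
  rw [(hasDerivAt_clampedPlateProfile hR).deriv, hc, tanh_eq_sinh_div_cosh]
  field_simp
  ring

end clampedPlateProfile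

/-- The explicit radial function `u` on the hyperbolic geodesic disk of radius `R`
solves the clamped-plate equation `Δ²u = 1` on `(0,R)` with clamped boundary
conditions `u(R) = 0` and `u′(R) = 0`. -/
theorem stmt_4 (R : ℝ) (hR0 : 0 < R)
    (c : ℝ) (hc : c = -4 * (Real.cosh (R/2) / Real.sinh (R/2))^2 * Real.log (Real.cosh (R/2)))
    (u : ℝ → ℝ)
    (hu : ∀ r, u r = 2 * (Real.log (Real.cosh (r/2)))^2 - 2 * (Real.log (Real.cosh (R/2)))^2
        + Li2 ((Real.tanh (r/2))^2) - Li2 ((Real.tanh (R/2))^2)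
        + c * Real.log (Real.cosh (r/2) / Real.cosh (R/2))) :
    (∀ r ∈ Set.Ioo (0:ℝ) R, hypLap (hypLap u) r = 1) ∧ u R = 0 ∧ deriv u R = 0 := by
  obtain rfl : u = clampedPlateProfile R c := funext hu
  exact ⟨fun r hr => hypLap_hypLap_clampedPlateProfile hr.1.ne', clampedPlateProfile_self,
    deriv_clampedPlateProfile_self hR0.ne' hc⟩
end

section
/- Let 0 < R < π and define E : (0, R) → ℝ by E(a) = −(π / (4 sin²(R/2))) · ( 1 − cos(2a) − 4(1 − cos a)cos R + 16(cos a − cos R) log cos(a/2) − 16(1 + cos R)(log cos(a/2))² ). Then for every a ∈ (0, R), E is differentiable at a with E′(a) = π · ((cos a − cos R)/sin²(R/2)) · (1 − cos a + 4 log cos(a/2)) · tan(a/2), and E′(a) < 0. -/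
/-!
Write `c = cos (a/2)` and `t = tan (a/2)`. Differentiating term by term and using the half-angle
identity `sin a = (1 + cos a) t`, the derivative of the bracket in `E` collapses to
`-4 (cos a - cos R)(1 - cos a + 4 log c) t`. On `(0, R)` the factors `cos a - cos R` and `t` are
positive, while `1 - cos a + 4 log c = 2 (1 - c²) + 4 log c < 2 (1 - c²) + 4 (c - 1) = -2 (1 - c)²`
because `log c < c - 1` for `c ≠ 1`.
-/

open Real

/-- `E = -(π / (4 sin²(R/2))) · twoBallEnergyBracket R`. -/
noncomputable def twoBallEnergyBracket (R a : ℝ) : ℝ :=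
  1 - cos (2 * a) - 4 * (1 - cos a) * cos R + 16 * (cos a - cos R) * log (cos (a / 2))
    - 16 * (1 + cos R) * log (cos (a / 2)) ^ 2

lemma Real.sin_eq_one_add_cos_mul_tan_half {x : ℝ} (hx : cos (x / 2) ≠ 0) :
    sin x = (1 + cos x) * tan (x / 2) := by
  have hsin : sin x = 2 * sin (x / 2) * cos (x / 2) := by
    rw [← sin_two_mul, mul_div_cancel₀ x two_ne_zero]
  have hcos : cos x = 2 * cos (x / 2) ^ 2 - 1 := by
    rw [← cos_two_mul, mul_div_cancel₀ x two_ne_zero]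
  rw [hsin, hcos, tan_eq_sin_div_cos]
  field_simp
  ring

lemma Real.hasDerivAt_log_cos_half {a : ℝ} (ha : cos (a / 2) ≠ 0) :
    HasDerivAt (fun x => log (cos (x / 2))) (-tan (a / 2) / 2) a := by
  have hhalf : HasDerivAt (fun x : ℝ => x / 2) (1 / 2) a := (hasDerivAt_id a).div_const 2
  convert hhalf.cos.log ha using 1
  rw [tan_eq_sin_div_cos]
  ring

lemma hasDerivAt_twoBallEnergyBracket (R : ℝ) {a : ℝ} (ha : cos (a / 2) ≠ 0) :
    HasDerivAt (twoBallEnergyBracket R)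
      (-4 * (cos a - cos R) * (1 - cos a + 4 * log (cos (a / 2))) * tan (a / 2)) a := by
  have hL := hasDerivAt_log_cos_half ha
  have hdouble : HasDerivAt (fun x : ℝ => 2 * x) 2 a := by
    simpa using (hasDerivAt_id a).const_mul 2
  have h := ((((hasDerivAt_const a 1).sub hdouble.cos).sub
      ((((hasDerivAt_const a 1).sub (hasDerivAt_cos a)).const_mul 4).mul_const (cos R))).add
    (((hasDerivAt_cos a).sub_const (cos R)).const_mul 16 |>.mul hL)).sub
    ((hL.pow 2).const_mul (16 * (1 + cos R)))
  refine h.congr_deriv ?_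
  rw [sin_two_mul, sin_eq_one_add_cos_mul_tan_half ha]
  ring

lemma Real.one_sub_cos_add_four_log_cos_half_neg {a : ℝ} (ha0 : 0 < a) (haπ : a < π) :
    1 - cos a + 4 * log (cos (a / 2)) < 0 := by
  set c := cos (a / 2)
  have hc : 0 < c := cos_pos_of_mem_Ioo ⟨by linarith, by linarith⟩
  have hc1 : c ≠ 1 := by
    have := cos_lt_cos_of_nonneg_of_le_pi le_rfl (by linarith) (by linarith : 0 < a / 2)
    rw [cos_zero] at this
    exact this.ne
  have hcos : cos a = 2 * c ^ 2 - 1 := by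
    rw [← cos_two_mul, mul_div_cancel₀ a two_ne_zero]
  have hlog := log_lt_sub_one_of_pos hc hc1
  nlinarith [sq_nonneg (c - 1)]

theorem stmt_6_general (R : ℝ) (hRπ : R < π)
    (E : ℝ → ℝ)
    (hE : ∀ a, E a = -(π / (4 * (Real.sin (R/2))^2)) *
        (1 - Real.cos (2*a) - 4*(1 - Real.cos a)*Real.cos R
          + 16*(Real.cos a - Real.cos R)*Real.log (Real.cos (a/2))
          - 16*(1 + Real.cos R)*(Real.log (Real.cos (a/2)))^2)) :
    ∀ a ∈ Set.Ioo (0:ℝ) R,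
      HasDerivAt E (π * ((Real.cos a - Real.cos R)/(Real.sin (R/2))^2) *
          (1 - Real.cos a + 4*Real.log (Real.cos (a/2))) * Real.tan (a/2)) a ∧
      π * ((Real.cos a - Real.cos R)/(Real.sin (R/2))^2) *
          (1 - Real.cos a + 4*Real.log (Real.cos (a/2))) * Real.tan (a/2) < 0 := by
  rintro a ⟨ha0, haR⟩
  have hE' : E = fun x => -(π / (4 * sin (R / 2) ^ 2)) * twoBallEnergyBracket R x :=
    funext hE
  have hcos_half : 0 < cos (a / 2) := cos_pos_of_mem_Ioo ⟨by linarith, by linarith⟩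
  have hcos : cos R < cos a := cos_lt_cos_of_nonneg_of_le_pi ha0.le hRπ.le haR
  have hsin : 0 < sin (R / 2) := sin_pos_of_pos_of_lt_pi (by linarith) (by linarith)
  have htan : 0 < tan (a / 2) := tan_pos_of_pos_of_lt_pi_div_two (by linarith) (by linarith)
  constructor
  · rw [hE']
    refine ((hasDerivAt_twoBallEnergyBracket R hcos_half.ne').const_mul
      (-(π / (4 * sin (R / 2) ^ 2)))).congr_deriv ?_
    ring
  · have hscale : 0 < π * ((cos a - cos R) / sin (R / 2) ^ 2) :=
      mul_pos pi_pos (div_pos (by linarith) (by positivity))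
    exact mul_neg_of_neg_of_pos
      (mul_neg_of_pos_of_neg hscale (one_sub_cos_add_four_log_cos_half_neg ha0 (haR.trans hRπ)))
      htan

/-- The explicit spherical two-ball auxiliary energy `E(a)` on the unit 2-sphere
has derivative `E′(a) = π((cos a − cos R)/sin²(R/2))(1 − cos a + 4 log cos(a/2)) tan(a/2)`,
which is negative, for every `a ∈ (0,R)` with `0 < R < π`. -/
theorem stmt_6 (R : ℝ) (hR0 : 0 < R) (hRπ : R < π)
    (E : ℝ → ℝ)
    (hE : ∀ a, E a = -(π / (4 * (Real.sin (R/2))^2)) *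
        (1 - Real.cos (2*a) - 4*(1 - Real.cos a)*Real.cos R
          + 16*(Real.cos a - Real.cos R)*Real.log (Real.cos (a/2))
          - 16*(1 + Real.cos R)*(Real.log (Real.cos (a/2)))^2)) :
    ∀ a ∈ Set.Ioo (0:ℝ) R,
      HasDerivAt E (π * ((Real.cos a - Real.cos R)/(Real.sin (R/2))^2) *
          (1 - Real.cos a + 4*Real.log (Real.cos (a/2))) * Real.tan (a/2)) a ∧
      π * ((Real.cos a - Real.cos R)/(Real.sin (R/2))^2) *
          (1 - Real.cos a + 4*Real.log (Real.cos (a/2))) * Real.tan (a/2) < 0 :=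
  stmt_6_general R hRπ E hE
end
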